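/- For β ∈ T_n, the matrix ψ_{n+1}(ι^L(β)) has block form [[1, w],[0, ψ_n(β)]] for some row vector w of length n−1, i.e., the first column of ψ_{n+1}(ι^L(β)) is the standard basis vector e_1. -/

import Mathlib

open Matrix Polynomial

/-- Deformed Tits matrix `V_i` (generator index `i` is 1-based, `1 ≤ i ≤ m`):
the identity `m × m` matrix except column `i`, which has `-1` on the diagonal,
`y` in row `i-1` and `x` in row `i+1`. -/
def Vmat {R : Type*} [CommRing R] (x y : R) (m i : ℕ) : Matrix (Fin m) (Fin m) R :=
  Matrix.of fun r c =>
    if (c : ℕ) + 1 = i then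
      if (r : ℕ) + 1 = i then -1
      else if (r : ℕ) + 2 = i then y
      else if (r : ℕ) = i then x
      else 0
    else if r = c then 1 else 0

/-- Relators of the twin group with `m` generators (the twin group on `m+1` strands). -/
def twinRels (m : ℕ) : Set (FreeGroup (Fin m)) :=
  {r | (∃ i, r = FreeGroup.of i * FreeGroup.of i) ∨
       (∃ i j : Fin m, (i : ℕ) + 1 < (j : ℕ) ∧
          r = FreeGroup.of i * FreeGroup.of j * (FreeGroup.of i)⁻¹ * (FreeGroup.of j)⁻¹)}

/-- The twin group `T_{m+1}` on `m+1` strands, with `m` generators `t_1, …, t_m`;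
the generator `t_{i+1}` is `TwinGroup.of i` for `i : Fin m`. -/
def TwinGroup (m : ℕ) : Type := PresentedGroup (twinRels m)

instance (m : ℕ) : Group (TwinGroup m) :=
  inferInstanceAs (Group (PresentedGroup (twinRels m)))

/-- The generator `t_{i+1}` of the twin group. -/
def TwinGroup.of {m : ℕ} (i : Fin m) : TwinGroup m := PresentedGroup.of i

/-- The ring `ℤ[x,y]`. -/
noncomputable abbrev Lam : Type := MvPolynomial (Fin 2) ℤ

/-- The variable `x` of `ℤ[x,y]`. -/
noncomputable def xP : Lam := MvPolynomial.X 0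

/-- The variable `y` of `ℤ[x,y]`. -/
noncomputable def yP : Lam := MvPolynomial.X 1

/-!
Matrices of block form `[[1, w], [0, A]]` form a monoid on which `[[1, w], [0, A]] ↦ A` is
multiplicative. The generators `ι^L(t_i) = t_{i+1}` are sent by `ψ_{n+1}` to such matrices with
lower right block `V_i = ψ_n(t_i)`. As the `t_i` are involutions they generate `T_n` as a monoid,
so `ψ_{n+1} ∘ ι^L` takes values in that monoid and its lower right block agrees with `ψ_n`.
-/

namespace TwinGroup

variable {m : ℕ}

theorem of_mul_self (i : Fin m) : of i * of i = 1 :=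
  PresentedGroup.one_of_mem (Or.inl ⟨i, rfl⟩)

theorem of_inv (i : Fin m) : (of i)⁻¹ = of i :=
  inv_eq_of_mul_eq_one_right (of_mul_self i)

theorem closure_range_of : Subgroup.closure (Set.range (of : Fin m → TwinGroup m)) = ⊤ :=
  PresentedGroup.closure_range_of _

/-- The generators are involutions, so no inverses are needed. -/
theorem submonoidClosure_range_of :
    Submonoid.closure (Set.range (of : Fin m → TwinGroup m)) = ⊤ := by
  have hinv : (Set.range (of : Fin m → TwinGroup m))⁻¹ = Set.range of := by
    ext g
    simp only [Set.mem_inv, Set.mem_range, eq_comm (b := g⁻¹), inv_eq_iff_eq_inv, of_inv,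
      eq_comm (a := g)]
  rw [← Subgroup.top_toSubmonoid, ← closure_range_of, Subgroup.closure_toSubmonoid, hinv,
    Set.union_self]

theorem monoidHom_ext {M : Type*} [Monoid M] {f g : TwinGroup m →* M}
    (h : ∀ i, f (of i) = g (of i)) : f = g :=
  MonoidHom.eq_of_eqOn_denseM submonoidClosure_range_of (Set.forall_mem_range.2 h)

theorem monoidHom_apply_mem {M : Type*} [Monoid M] (f : TwinGroup m →* M) (S : Submonoid M)
    (h : ∀ i, f (of i) ∈ S) (g : TwinGroup m) : f g ∈ S := by
  have : Submonoid.closure (Set.range of) ≤ S.comap f :=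
    Submonoid.closure_le.2 (Set.forall_mem_range.2 h)
  exact this (submonoidClosure_range_of ▸ Submonoid.mem_top g)

end TwinGroup

namespace Matrix

variable (R : Type*) [Semiring R] (n : ℕ)

/-- Matrices of block form `[[1, w], [0, A]]`. -/
def firstColOneSubmonoid : Submonoid (Matrix (Fin (n + 1)) (Fin (n + 1)) R) where
  carrier := {M | ∀ r, M r 0 = if r = 0 then 1 else 0}
  one_mem' _ := one_apply
  mul_mem' {A B} hA hB r := by
    change ∑ j, A r j * B j 0 = _
    simp [hB _, hA r]

/-- Multiplicative because the block below `1` vanishes. -/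
def lowerRightBlockHom : firstColOneSubmonoid R n →* Matrix (Fin n) (Fin n) R where
  toFun M := (M : Matrix (Fin (n + 1)) (Fin (n + 1)) R).submatrix Fin.succ Fin.succ
  map_one' := by
    ext r c
    simp [one_apply]
  map_mul' A B := by
    ext r c
    simp [mul_apply, Fin.sum_univ_succ, A.2 r.succ]

end Matrix

section Vmat

variable {R : Type*} [CommRing R] (x y : R) (m i : ℕ)

theorem Vmat_mem_firstColOneSubmonoid :
    Vmat x y (m + 1) (i + 2) ∈ firstColOneSubmonoid R m := by
  intro r
  simp [Vmat]

theorem Vmat_submatrix_succ :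
    (Vmat x y (m + 1) (i + 2)).submatrix Fin.succ Fin.succ = Vmat x y m (i + 1) := by
  ext r c
  simp only [Vmat, submatrix_apply, of_apply, Fin.val_succ, Fin.ext_iff]
  split_ifs <;> first | rfl | omega

end Vmat

theorem stmt10_general (m : ℕ)
    (ψ : TwinGroup m →* Matrix (Fin m) (Fin m) Lam)
    (hψ : ∀ i : Fin m, ψ (TwinGroup.of i) = Vmat xP yP m ((i : ℕ) + 1))
    (ψ' : TwinGroup (m+1) →* Matrix (Fin (m+1)) (Fin (m+1)) Lam)
    (hψ' : ∀ i : Fin (m+1), ψ' (TwinGroup.of i) = Vmat xP yP (m+1) ((i : ℕ) + 1))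
    (ιL : TwinGroup m →* TwinGroup (m+1))
    (hιL : ∀ i : Fin m, ιL (TwinGroup.of i) = TwinGroup.of i.succ)
    (β : TwinGroup m) :
    (∀ r : Fin (m+1), ψ' (ιL β) r 0 = if r = 0 then 1 else 0) ∧
    (∀ r c : Fin m, ψ' (ιL β) r.succ c.succ = ψ β r c) := by
  set f := ψ'.comp ιL
  have hf : ∀ i : Fin m, f (TwinGroup.of i) = Vmat xP yP (m + 1) ((i : ℕ) + 2) := fun i => by
    simp [f, hιL, hψ']
  have hmem : ∀ g, f g ∈ firstColOneSubmonoid Lam m :=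
    TwinGroup.monoidHom_apply_mem f _ fun i => hf i ▸ Vmat_mem_firstColOneSubmonoid _ _ _ _
  have hblock : (lowerRightBlockHom Lam m).comp (f.codRestrict _ hmem) = ψ :=
    TwinGroup.monoidHom_ext fun i => by
      change (f (TwinGroup.of i)).submatrix Fin.succ Fin.succ = _
      rw [hf, hψ, Vmat_submatrix_succ]
  refine ⟨hmem β, fun r c => ?_⟩
  rw [← hblock]
  rfl

/-- For `β ∈ T_n` (`n = m+1`), `ψ_{n+1}(ι^L(β))` has block form
`[[1, w], [0, ψ_n(β)]]`: its first column is the standard basis vector `e_1`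
and its bottom-right `(n-1)×(n-1)` block is `ψ_n(β)`. -/
theorem stmt10 (m : ℕ) (hm : 1 ≤ m)
    (ψ : TwinGroup m →* Matrix (Fin m) (Fin m) Lam)
    (hψ : ∀ i : Fin m, ψ (TwinGroup.of i) = Vmat xP yP m ((i : ℕ) + 1))
    (ψ' : TwinGroup (m+1) →* Matrix (Fin (m+1)) (Fin (m+1)) Lam)
    (hψ' : ∀ i : Fin (m+1), ψ' (TwinGroup.of i) = Vmat xP yP (m+1) ((i : ℕ) + 1))
    (ιL : TwinGroup m →* TwinGroup (m+1))
    (hιL : ∀ i : Fin m, ιL (TwinGroup.of i) = TwinGroup.of i.succ)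
    (β : TwinGroup m) :
    (∀ r : Fin (m+1), ψ' (ιL β) r 0 = if r = 0 then 1 else 0) ∧
    (∀ r c : Fin m, ψ' (ιL β) r.succ c.succ = ψ β r c) :=
  stmt10_general m ψ hψ ψ' hψ' ιL hιL β
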